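/- Let K be a field, n ≥ 1 and m, l ≥ 0 with m + l ≤ n, and let U, V ∈ M_n(K) be the block matrices U = [[I_m,0],[0,0]] (blocks of sizes m, n−m) and V = [[0,0,0],[0,I_l,0],[0,0,0]] (blocks of sizes m, l, n−m−l). Then the K-vector space {(X, X') ∈ M_n(K) × M_n(K) : U·X = X'·U and X·V = V·X'} has dimension n² + (n − m − l)². -/

import Mathlib

/-!
`U` and `V` are diagonal with 0/1 entries `u i = [i < m]` and `v i = [m ≤ i < m + l]`, so the
two equations constrain each pair of entries `(X i j, X' i j)` separately, by
`u i x = u j x'` and `v j x = v i x'`. No index lies in both blocks, so at every position one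
of the two equations is trivial or they coincide: the pair ranges over a line of `K²`, except
when both `i` and `j` lie in the last block, where it is unconstrained. Summing over the `n²`
positions gives `n² + (n - m - l)²`.
-/

/-- The block matrix `U = [[Iₘ, 0],[0,0]]` (blocks of sizes `m`, `n−m`). -/
def Umat (K : Type*) [Field K] (n m : ℕ) : Matrix (Fin n) (Fin n) K :=
  fun i j => if i = j ∧ i.val < m then 1 else 0

/-- The block matrix `V = [[0,0,0],[0,I_l,0],[0,0,0]]` (blocks of sizes `m`, `l`, `n−m−l`). -/
def Vmat (K : Type*) [Field K] (n m l : ℕ) : Matrix (Fin n) (Fin n) K :=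
  fun i j => if i = j ∧ m ≤ i.val ∧ i.val < m + l then 1 else 0

/-- The space of pairs `(X, X')` of `n×n` matrices with `U·X = X'·U` and `X·V = V·X'`. -/
def solSpace (K : Type*) [Field K] (n m l : ℕ) :
    Submodule K (Matrix (Fin n) (Fin n) K × Matrix (Fin n) (Fin n) K) where
  carrier := {q | Umat K n m * q.1 = q.2 * Umat K n m ∧ q.1 * Vmat K n m l = Vmat K n m l * q.2}
  add_mem' := by
    rintro a b ⟨ha1, ha2⟩ ⟨hb1, hb2⟩
    constructor
    · simp only [Prod.fst_add, Prod.snd_add, Matrix.mul_add, Matrix.add_mul, ha1, hb1]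
    · simp only [Prod.fst_add, Prod.snd_add, Matrix.mul_add, Matrix.add_mul, ha2, hb2]
  zero_mem' := by simp
  smul_mem' := by
    rintro c a ⟨ha1, ha2⟩
    constructor
    · simp only [Prod.smul_fst, Prod.smul_snd, Matrix.mul_smul, Matrix.smul_mul, ha1]
    · simp only [Prod.smul_fst, Prod.smul_snd, Matrix.mul_smul, Matrix.smul_mul, ha2]

open Matrix LinearMap Module Finset

theorem Matrix.diagonal_mul_eq_mul_diagonal_iff {ι κ R : Type*} [Fintype ι] [Fintype κ]
    [DecidableEq ι] [DecidableEq κ] [Semiring R] (d : ι → R) (d' : κ → R)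
    (X X' : Matrix ι κ R) :
    diagonal d * X = X' * diagonal d' ↔ ∀ i j, d i * X i j = X' i j * d' j := by
  simp only [← Matrix.ext_iff, diagonal_mul, mul_diagonal]

section EntrySpace

variable {R : Type*} [CommRing R]

def pairForm (α α' : R) : Dual R (R × R) := α • fst R R R - α' • snd R R R

@[simp]
theorem pairForm_apply (α α' : R) (q : R × R) : pairForm α α' q = α * q.1 - α' * q.2 := rfl

theorem pairForm_eq_zero_iff {α α' : R} : pairForm α α' = 0 ↔ α = 0 ∧ α' = 0 := by
  constructor
  · intro h
    simpa using And.intro (LinearMap.congr_fun h (1, 0)) (LinearMap.congr_fun h (0, 1))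
  · rintro ⟨rfl, rfl⟩
    ext <;> simp

def entrySpace (α α' β β' : R) : Submodule R (R × R) :=
  ker (pairForm α α') ⊓ ker (pairForm β β')

theorem mem_entrySpace {α α' β β' : R} {q : R × R} :
    q ∈ entrySpace α α' β β' ↔ α * q.1 = α' * q.2 ∧ β * q.1 = β' * q.2 := by
  simp [entrySpace, sub_eq_zero]

theorem entrySpace_self (α α' : R) : entrySpace α α' α α' = ker (pairForm α α') :=
  inf_idem _

theorem entrySpace_zero_right (α α' : R) : entrySpace α α' 0 0 = ker (pairForm α α') := by
  ext; simp [mem_entrySpace, sub_eq_zero]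

theorem entrySpace_zero_left (β β' : R) : entrySpace 0 0 β β' = ker (pairForm β β') := by
  ext; simp [mem_entrySpace, sub_eq_zero]

end EntrySpace

section FieldEntrySpace

variable {K : Type*} [Field K]

theorem finrank_ker_pairForm {α α' : K} (h : α ≠ 0 ∨ α' ≠ 0) :
    finrank K (ker (pairForm α α')) = 1 := by
  have hne : pairForm α α' ≠ 0 := pairForm_eq_zero_iff.not.2 (by tauto)
  have := (pairForm α α').finrank_ker_add_one_of_ne_zero hne
  rw [finrank_prod, finrank_self] at this
  omega

theorem finrank_entrySpace_zero : finrank K (entrySpace (0 : K) 0 0 0) = 2 := by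
  rw [entrySpace_zero_left, pairForm_eq_zero_iff.2 ⟨rfl, rfl⟩, ker_zero, finrank_top,
    finrank_prod, finrank_self]

end FieldEntrySpace

def blockEntrySpace (K : Type*) [Field K] (m l i j : ℕ) : Submodule K (K × K) :=
  entrySpace (if i < m then 1 else 0) (if j < m then 1 else 0)
    (if m ≤ j ∧ j < m + l then 1 else 0) (if m ≤ i ∧ i < m + l then 1 else 0)

theorem finrank_blockEntrySpace (K : Type*) [Field K] (m l i j : ℕ) :
    finrank K (blockEntrySpace K m l i j) =
      1 + (if m + l ≤ i then 1 else 0) * (if m + l ≤ j then 1 else 0) := by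
  unfold blockEntrySpace
  -- `simp` cannot rewrite the coefficients inside the type `↥(entrySpace …)`.
  generalize hα : (if i < m then (1 : K) else 0) = α
  generalize hα' : (if j < m then (1 : K) else 0) = α'
  generalize hβ : (if m ≤ j ∧ j < m + l then (1 : K) else 0) = β
  generalize hβ' : (if m ≤ i ∧ i < m + l then (1 : K) else 0) = β'
  have hi : i < m ∨ m ≤ i ∧ i < m + l ∨ m + l ≤ i := by omega
  have hj : j < m ∨ m ≤ j ∧ j < m + l ∨ m + l ≤ j := by omega
  rcases hi with hi | hi | hi <;> rcases hj with hj | hj | hj <;>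
  simp (disch := omega) only [if_pos, if_neg] at hα hα' hβ hβ' ⊢ <;> subst hα hα' hβ hβ' <;>
  first
  | rw [finrank_entrySpace_zero]
  | rw [entrySpace_zero_right, finrank_ker_pairForm (by norm_num)]
  | rw [entrySpace_zero_left, finrank_ker_pairForm (by norm_num)]
  | rw [entrySpace_self, finrank_ker_pairForm (by norm_num)]

theorem Umat_eq_diagonal (K : Type*) [Field K] (n m : ℕ) :
    Umat K n m = diagonal fun i : Fin n => if (i : ℕ) < m then 1 else 0 := by
  ext i j
  by_cases h : i = j <;> simp [Umat, h]

theorem Vmat_eq_diagonal (K : Type*) [Field K] (n m l : ℕ) :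
    Vmat K n m l = diagonal fun i : Fin n => if m ≤ (i : ℕ) ∧ (i : ℕ) < m + l then 1 else 0 := by
  ext i j
  by_cases h : i = j <;> simp [Vmat, h]

theorem mem_solSpace_iff {K : Type*} [Field K] {n m l : ℕ}
    {X : Matrix (Fin n) (Fin n) K × Matrix (Fin n) (Fin n) K} :
    X ∈ solSpace K n m l ↔ ∀ i j : Fin n, (X.1 i j, X.2 i j) ∈ blockEntrySpace K m l i j := by
  change Umat K n m * X.1 = X.2 * Umat K n m ∧ X.1 * Vmat K n m l = Vmat K n m l * X.2 ↔ _
  rw [Umat_eq_diagonal, Vmat_eq_diagonal, eq_comm (a := X.1 * _),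
    diagonal_mul_eq_mul_diagonal_iff, diagonal_mul_eq_mul_diagonal_iff]
  simp only [blockEntrySpace, mem_entrySpace, ← forall_and, mul_comm (X.2 _ _),
    mul_comm (X.1 _ _), eq_comm (b := _ * X.2 _ _)]

def solSpaceEquivPi (K : Type*) [Field K] (n m l : ℕ) :
    solSpace K n m l ≃ₗ[K] Π p : Fin n × Fin n, blockEntrySpace K m l p.1 p.2 where
  toFun X p := ⟨(X.1.1 p.1 p.2, X.1.2 p.1 p.2), mem_solSpace_iff.1 X.2 p.1 p.2⟩
  invFun w := ⟨(fun i j => (w (i, j)).1.1, fun i j => (w (i, j)).1.2),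
    mem_solSpace_iff.2 fun i j => (w (i, j)).2⟩
  map_add' _ _ := rfl
  map_smul' _ _ := rfl
  left_inv _ := rfl
  right_inv _ := rfl

theorem sum_sum_one_add_mul_indicator (n k : ℕ) :
    ∑ i : Fin n, ∑ j : Fin n,
      (1 + (if k ≤ (i : ℕ) then 1 else 0) * (if k ≤ (j : ℕ) then 1 else 0)) =
      n ^ 2 + (n - k) ^ 2 := by
  have hcard : ∑ i : Fin n, (if k ≤ (i : ℕ) then 1 else 0) = n - k := by
    rw [Fin.sum_univ_eq_sum_range (fun i => if k ≤ i then 1 else 0), sum_boole,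
      show {i ∈ range n | k ≤ i} = Ico k n by ext; simp [and_comm]]
    simp
  simp only [sum_add_distrib, ← mul_sum, ← sum_mul, hcard]
  simp [sq]

theorem stmt17_general (K : Type*) [Field K] (n m l : ℕ) :
    Module.finrank K (solSpace K n m l) = n ^ 2 + (n - m - l) ^ 2 := by
  rw [(solSpaceEquivPi K n m l).finrank_eq, finrank_pi_fintype, Fintype.sum_prod_type]
  simp only [finrank_blockEntrySpace]
  rw [sum_sum_one_add_mul_indicator, Nat.sub_sub]

/-- STATEMENT 17: the space of pairs `(X,X')` with `U·X = X'·U` and `X·V = V·X'` has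
dimension `n² + (n−m−l)²`. -/
theorem stmt17 (K : Type*) [Field K] (n m l : ℕ) (hn : 1 ≤ n) (hml : m + l ≤ n) :
    Module.finrank K (solSpace K n m l) = n ^ 2 + (n - m - l) ^ 2 :=
  stmt17_general K n m l
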